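/- arXiv:2305.13152 — 2 statements merged into one kernel-verified Lean document; each statement's English description precedes it below -/
import Mathlib

section
/- The finite-rank operator L(X^O)(u) = Σ_{k=1}^r ξ_k^O φ̃_k^O(u), where φ̃_k^O(u) = E[X(u) ξ_k^O]/λ_k^O, minimizes the mean squared error E[(X(u) - ℓ(X^O)(u))²] at every u ∈ [0,1] among all bounded linear operators ℓ: H → L²([0,1]). -/
open MeasureTheory RealInnerProductSpace

/-- The finite-rank operator `L(X^O)(u) = Σ_k ξ_k^O φ̃_k^O(u)` with
`φ̃_k^O(u) = E[X(u)ξ_k^O]/λ_k^O` minimizes `E[(X(u) − ℓ(X^O)(u))²]` at every `u ∈ [0,1]`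
among all bounded linear operators `ℓ : H → L²`, i.e. pointwise at `u` among all
continuous linear functionals applied to `X^O`. -/
theorem stmt_1
    {Ω : Type*} [MeasurableSpace Ω] (ℙ : Measure Ω) [IsProbabilityMeasure ℙ]
    {H : Type*} [NormedAddCommGroup H] [InnerProductSpace ℝ H]
    (r : ℕ)
    (ξ : Fin r → Ω → ℝ) (φ : Fin r → H) (lam : Fin r → ℝ)
    (hlam : ∀ k, 0 < lam k)
    (XO : Ω → H) (hKL : ∀ ω, XO ω = ∑ k, ξ k ω • φ k)
    (hvar : ∀ k, ∫ ω, (ξ k ω) ^ 2 ∂ℙ = lam k)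
    (huncorr : ∀ k l, k ≠ l → ∫ ω, ξ k ω * ξ l ω ∂ℙ = 0)
    (X : Ω → ℝ → ℝ)
    (hint : ∀ k l, Integrable (fun ω => ξ k ω * ξ l ω) ℙ)
    (hintX : ∀ k (u : ℝ), u ∈ Set.Icc (0:ℝ) 1 → Integrable (fun ω => X ω u * ξ k ω) ℙ)
    (hX2 : ∀ u : ℝ, u ∈ Set.Icc (0:ℝ) 1 → Integrable (fun ω => (X ω u) ^ 2) ℙ)
    (L : Ω → ℝ → ℝ)
    (hL : ∀ ω u, L ω u = ∑ k, ξ k ω * ((∫ ω', X ω' u * ξ k ω' ∂ℙ) / lam k)) :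
    ∀ (u : ℝ), u ∈ Set.Icc (0:ℝ) 1 → ∀ (ℓ : H →L[ℝ] ℝ),
      Integrable (fun ω => (ℓ (XO ω)) ^ 2) ℙ →
      ∫ ω, (X ω u - L ω u) ^ 2 ∂ℙ ≤ ∫ ω, (X ω u - ℓ (XO ω)) ^ 2 ∂ℙ := by
  intro u hu ℓ _
  set a : Fin r → ℝ := fun k => ∫ ω', X ω' u * ξ k ω' ∂ℙ with ha
  -- general expansion of the MSE for an arbitrary coefficient vector
  have expand : ∀ c : Fin r → ℝ,
      ∫ ω, (X ω u - ∑ k, c k * ξ k ω) ^ 2 ∂ℙ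
        = (∫ ω, (X ω u) ^ 2 ∂ℙ) - 2 * ∑ k, c k * a k + ∑ k, (c k) ^ 2 * lam k := by
    intro c
    have h1 : Integrable (fun ω => ∑ k, c k * (X ω u * ξ k ω)) ℙ :=
      integrable_finset_sum _ fun k _ => ((hintX k u hu).const_mul _)
    have h2 : Integrable (fun ω => ∑ k, ∑ l, (c k * c l) * (ξ k ω * ξ l ω)) ℙ :=
      integrable_finset_sum _ fun k _ =>
        integrable_finset_sum _ fun l _ => ((hint k l).const_mul _)
    have hpt : (fun ω => (X ω u - ∑ k, c k * ξ k ω) ^ 2)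
        = fun ω => ((X ω u) ^ 2 - 2 * ∑ k, c k * (X ω u * ξ k ω))
          + ∑ k, ∑ l, (c k * c l) * (ξ k ω * ξ l ω) := by
      funext ω
      have hS : (∑ k, c k * ξ k ω) ^ 2
          = ∑ k, ∑ l, (c k * c l) * (ξ k ω * ξ l ω) := by
        rw [sq, Finset.sum_mul_sum]
        exact Finset.sum_congr rfl fun k _ => Finset.sum_congr rfl fun l _ => by ring
      have hXS : X ω u * ∑ k, c k * ξ k ω = ∑ k, c k * (X ω u * ξ k ω) := by
        rw [Finset.mul_sum]
        exact Finset.sum_congr rfl fun k _ => by ring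
      have : (X ω u - ∑ k, c k * ξ k ω) ^ 2
          = (X ω u) ^ 2 - 2 * (X ω u * ∑ k, c k * ξ k ω)
            + (∑ k, c k * ξ k ω) ^ 2 := by ring
      rw [this, hS, hXS]
    have hmul : Integrable (fun ω => 2 * ∑ k, c k * (X ω u * ξ k ω)) ℙ := h1.const_mul 2
    have hsub : Integrable (fun ω => X ω u ^ 2 - 2 * ∑ k, c k * (X ω u * ξ k ω)) ℙ :=
      (hX2 u hu).sub hmul
    rw [hpt, integral_add hsub h2,
      integral_sub (hX2 u hu) hmul, integral_const_mul,
      integral_finset_sum _ fun k _ => (hintX k u hu).const_mul _,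
      integral_finset_sum _ fun k _ =>
        integrable_finset_sum _ fun l _ => (hint k l).const_mul _]
    congr 1
    · congr 2
      exact Finset.sum_congr rfl fun k _ => by rw [integral_const_mul]
    · refine Finset.sum_congr rfl fun k _ => ?_
      rw [integral_finset_sum _ fun l _ => (hint k l).const_mul _]
      rw [Finset.sum_eq_single_of_mem k (Finset.mem_univ k)]
      · rw [integral_const_mul]
        have : (fun ω => ξ k ω * ξ k ω) = fun ω => (ξ k ω) ^ 2 := by
          funext ω; ring
        rw [this, hvar k]; ring
      · intro l _ hl
        rw [integral_const_mul, huncorr k l (Ne.symm hl), mul_zero]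
  -- rewrite both integrands in the form used by `expand`
  have e1 : ∫ ω, (X ω u - L ω u) ^ 2 ∂ℙ
      = ∫ ω, (X ω u - ∑ k, (a k / lam k) * ξ k ω) ^ 2 ∂ℙ := by
    congr 1; funext ω
    rw [hL ω u]
    congr 2
    exact Finset.sum_congr rfl fun k _ => by rw [mul_comm]
  have e2 : ∫ ω, (X ω u - ℓ (XO ω)) ^ 2 ∂ℙ
      = ∫ ω, (X ω u - ∑ k, (ℓ (φ k)) * ξ k ω) ^ 2 ∂ℙ := by
    congr 1; funext ω
    rw [hKL ω, map_sum]
    congr 2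
    exact Finset.sum_congr rfl fun k _ => by
      rw [ℓ.map_smul, smul_eq_mul, mul_comm]
  rw [e1, e2, expand, expand]
  -- per-coordinate optimality
  have key : ∀ k, (a k / lam k) ^ 2 * lam k - 2 * ((a k / lam k) * a k)
      ≤ (ℓ (φ k)) ^ 2 * lam k - 2 * ((ℓ (φ k)) * a k) := by
    intro k
    have hl := hlam k
    have hsq := sq_nonneg (ℓ (φ k) - a k / lam k)
    have hexp : (ℓ (φ k)) ^ 2 * lam k - 2 * ((ℓ (φ k)) * a k)
        - ((a k / lam k) ^ 2 * lam k - 2 * ((a k / lam k) * a k))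
        = lam k * (ℓ (φ k) - a k / lam k) ^ 2 := by
      field_simp
      ring
    nlinarith [mul_nonneg hl.le hsq]
  have hsum : ∑ k, ((a k / lam k) ^ 2 * lam k - 2 * ((a k / lam k) * a k))
      ≤ ∑ k, ((ℓ (φ k)) ^ 2 * lam k - 2 * ((ℓ (φ k)) * a k)) :=
    Finset.sum_le_sum fun k _ => key k
  simp only [Finset.sum_sub_distrib, ← Finset.mul_sum] at hsum
  linarith
end

section
/- Let F be a continuous cumulative distribution function and let (ζ̂_t)_{t≤T} and (ζ_t)_{t≤T} be random variables with ζ_t i.i.d. with cdf F and max_t |ζ̂_t − ζ_t| → 0 in probability as T → ∞. Let F̂ and F̃ be the empirical cdfs of (ζ_t) and (ζ̂_t) respectively. Then sup_z |F̂(z) − F̃(z)| → 0 in probability as T → ∞. -/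
/-!
If every perturbation is at most `δ`, the empirical cdf of the perturbed sample is sandwiched
between shifts of the original one: `F̂ (z - δ) ≤ F̃ z ≤ F̂ (z + δ)`. Hence
`|F̂ z - F̃ z| ≤ 2 ‖F̂ - F‖∞ + (F (z + δ) - F (z - δ))`. The last term is uniformly small because a
continuous cdf is uniformly continuous, and `‖F̂ - F‖∞ → 0` in probability (Glivenko–Cantelli):
monotonicity reduces the supremum to finitely many grid points, where the law of large numbers
applies.
-/

open MeasureTheory Finset Filter Topology

theorem Continuous.uniformContinuous_of_tendsto_atBot_atTop {f : ℝ → ℝ} {a b : ℝ}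
    (hf : Continuous f) (ha : Tendsto f atBot (𝓝 a)) (hb : Tendsto f atTop (𝓝 b)) :
    UniformContinuous f := by
  -- `f` differs from a clamped affine function by a function vanishing at infinity
  set φ : ℝ → ℝ := fun x => a + (b - a) * max 0 (min 1 x)
  have hφ : UniformContinuous φ :=
    uniformContinuous_const.add ((LipschitzWith.id.const_min 1).const_max 0
      |>.uniformContinuous.const_mul' (b - a))
  have hφa : Tendsto φ atBot (𝓝 a) := by
    refine tendsto_const_nhds.congr' ?_
    filter_upwards [eventually_le_atBot 0] with x hx
    simp [φ, min_eq_right (hx.trans zero_le_one), hx]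
  have hφb : Tendsto φ atTop (𝓝 b) := by
    refine tendsto_const_nhds.congr' ?_
    filter_upwards [eventually_ge_atTop 1] with x hx
    simp [φ, hx]
  have hfφ : Tendsto (fun x => f x - φ x) (Filter.cocompact ℝ) (𝓝 0) := by
    rw [cocompact_eq_atBot_atTop, tendsto_sup]
    exact ⟨by simpa using ha.sub hφa, by simpa using hb.sub hφb⟩
  simpa using ((hf.sub hφ.continuous).uniformContinuous_of_tendsto_cocompact hfφ).add hφ

theorem UniformContinuous.exists_pos_forall_sub_le {G : ℝ → ℝ} (hG : UniformContinuous G)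
    {ε : ℝ} (hε : 0 < ε) : ∃ δ > 0, ∀ z, G (z + δ) - G (z - δ) ≤ ε := by
  obtain ⟨r, hr, hGr⟩ := Metric.uniformContinuous_iff_le.1 hG ε hε
  refine ⟨r / 2, half_pos hr, fun z => (le_abs_self _).trans (hGr ?_)⟩
  rw [Real.dist_eq, add_sub_sub_cancel, add_halves, abs_of_pos hr]

noncomputable def empiricalCDF (x : ℕ → ℝ) (T : ℕ) (z : ℝ) : ℝ :=
  (∑ t ∈ range T, if x t ≤ z then (1 : ℝ) else 0) / T

section empiricalCDF

variable (x : ℕ → ℝ) (T : ℕ)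

theorem monotone_empiricalCDF : Monotone (empiricalCDF x T) := fun z₁ z₂ hz => by
  unfold empiricalCDF
  gcongr with t
  split_ifs with h₁ h₂ <;> norm_num
  exact h₂ (h₁.trans hz)

theorem empiricalCDF_mem_Icc (z : ℝ) : empiricalCDF x T z ∈ Set.Icc 0 1 := by
  have hsum : ∑ t ∈ range T, (if x t ≤ z then (1 : ℝ) else 0) ≤ T :=
    (sum_le_sum (g := fun _ => (1 : ℝ)) fun t _ => by split_ifs <;> norm_num).trans (by simp)
  unfold empiricalCDF
  exact ⟨div_nonneg (sum_nonneg fun t _ => by split_ifs <;> norm_num) T.cast_nonneg,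
    div_le_one_of_le₀ hsum T.cast_nonneg⟩

variable {x T}

theorem empiricalCDF_sub_le_of_abs_sub_le {y : ℕ → ℝ} {δ : ℝ}
    (hxy : ∀ t < T, |y t - x t| ≤ δ) (z : ℝ) :
    empiricalCDF x T (z - δ) ≤ empiricalCDF y T z := by
  unfold empiricalCDF
  gcongr with t ht
  have := (abs_le.1 (hxy t (mem_range.1 ht))).2
  split_ifs with h₁ h₂ <;> norm_num
  exact h₂ (by linarith)

theorem abs_empiricalCDF_sub_le {y : ℕ → ℝ} {G : ℝ → ℝ} {δ c : ℝ} (hG : Monotone G)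
    (hδ : 0 ≤ δ) (hxy : ∀ t < T, |y t - x t| ≤ δ) (hxG : ∀ z, |empiricalCDF x T z - G z| ≤ c)
    (z : ℝ) :
    |empiricalCDF x T z - empiricalCDF y T z| ≤ 2 * c + (G (z + δ) - G (z - δ)) := by
  have hlow := empiricalCDF_sub_le_of_abs_sub_le hxy z
  have hup := empiricalCDF_sub_le_of_abs_sub_le
    (fun t ht => (abs_sub_comm _ _).trans_le (hxy t ht)) (z + δ)
  rw [add_sub_cancel_right] at hup
  have h₁ := abs_le.1 (hxG (z - δ))
  have h₂ := abs_le.1 (hxG z)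
  have h₃ := abs_le.1 (hxG (z + δ))
  have h₄ : G (z - δ) ≤ G z := hG (by linarith)
  have h₅ : G z ≤ G (z + δ) := hG (by linarith)
  rw [abs_le]
  constructor <;> linarith

theorem iSup_abs_empiricalCDF_sub_le {y : ℕ → ℝ} {G : ℝ → ℝ} {δ c η : ℝ} (hG : Monotone G)
    (hδ : 0 ≤ δ) (hGδ : ∀ z, G (z + δ) - G (z - δ) ≤ η) (hxy : ∀ t < T, |y t - x t| ≤ δ)
    (hxG : ∀ z, |empiricalCDF x T z - G z| ≤ c) :
    ⨆ z, |empiricalCDF x T z - empiricalCDF y T z| ≤ 2 * c + η :=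
  ciSup_le fun z => (abs_empiricalCDF_sub_le hG hδ hxy hxG z).trans (by linarith [hGδ z])

end empiricalCDF

theorem abs_sub_le_of_bracket {h g h₁ g₁ h₂ g₂ c η : ℝ} (hh : h₁ ≤ h ∧ h ≤ h₂)
    (hg : g₁ ≤ g ∧ g ≤ g₂) (hc₁ : |h₁ - g₁| ≤ c) (hc₂ : |h₂ - g₂| ≤ c) (hη : g₂ - g₁ ≤ η) :
    |h - g| ≤ c + η := by
  rw [abs_le] at *
  constructor <;> linarith

theorem Monotone.exists_finset_abs_sub_le {G : ℝ → ℝ} (hG : Monotone G)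
    (hGu : UniformContinuous G) (hbot : Tendsto G atBot (𝓝 0)) (htop : Tendsto G atTop (𝓝 1))
    {η : ℝ} (hη : 0 < η) :
    ∃ S : Finset ℝ, ∀ H : ℝ → ℝ, Monotone H → (∀ z, H z ∈ Set.Icc 0 1) → ∀ c,
      (∀ s ∈ S, |H s - G s| ≤ c) → ∀ z, |H z - G z| ≤ c + η := by
  obtain ⟨h, hh, hGh⟩ := Metric.uniformContinuous_iff_le.1 hGu η hη
  obtain ⟨a, ha⟩ := (hbot.eventually (ge_mem_nhds hη)).exists_forall_of_atBot
  obtain ⟨b, hb⟩ :=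
    (htop.eventually (le_mem_nhds (by linarith : 1 - η < 1))).exists_forall_of_atTop
  obtain ⟨N, hN⟩ := exists_nat_ge (max (-a) b / h)
  rw [div_le_iff₀ hh, max_le_iff] at hN
  refine ⟨(Icc (-N : ℤ) N).image (fun k : ℤ => k * h), fun H hH hH01 c hc z => ?_⟩
  have hgrid : ∀ k : ℤ, -N ≤ k → k ≤ N → |H (k * h) - G (k * h)| ≤ c := fun k hk₁ hk₂ =>
    hc _ (mem_image_of_mem _ (mem_Icc.2 ⟨hk₁, hk₂⟩))
  have hG01 : ∀ x, G x ∈ Set.Icc 0 1 := fun x =>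
    ⟨hG.le_of_tendsto hbot x, hG.ge_of_tendsto htop x⟩
  -- `z` lies in the cell `[k h, (k + 1) h]`; cells beyond `±N h` are controlled by the tails of `G`
  set k := ⌊z / h⌋
  have hkz : k * h ≤ z := (le_div_iff₀ hh).1 (Int.floor_le _)
  have hzk : z ≤ (k + 1) * h := ((div_le_iff₀ hh).1 (Int.lt_floor_add_one _).le)
  have hc0 : 0 ≤ c := (abs_nonneg _).trans (hgrid 0 (by omega) (by omega))
  rcases lt_or_ge k (-N) with hk | hk
  · have hzN : z ≤ -N * h := hzk.trans (mul_le_mul_of_nonneg_right (by exact_mod_cast hk) hh.le)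
    refine abs_sub_le_of_bracket ⟨(hH01 z).1, hH hzN⟩ ⟨(hG01 z).1, hG hzN⟩ (by simpa using hc0)
      (by exact_mod_cast hgrid (-N) le_rfl (by omega)) (by simpa using ha _ (by linarith))
  rcases lt_or_ge k N with hk' | hk'
  · refine abs_sub_le_of_bracket ⟨hH hkz, hH hzk⟩ ⟨hG hkz, hG hzk⟩ (hgrid k hk hk'.le)
      (by exact_mod_cast hgrid (k + 1) (by omega) (by omega)) ((le_abs_self _).trans ?_)
    rw [← Real.dist_eq]
    exact hGh (by rw [Real.dist_eq, ← sub_mul, add_sub_cancel_left, one_mul, abs_of_pos hh])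
  · have hNz : N * h ≤ z := (mul_le_mul_of_nonneg_right (by exact_mod_cast hk') hh.le).trans hkz
    refine abs_sub_le_of_bracket ⟨hH hNz, (hH01 z).2⟩ ⟨hG hNz, (hG01 z).2⟩
      (by exact_mod_cast hgrid N (by omega) le_rfl) (by simpa using hc0) ?_
    linarith [hb _ hN.2]

section

open ProbabilityTheory

variable {Ω : Type*} [MeasurableSpace Ω] {μ : Measure Ω} [IsProbabilityMeasure μ]

theorem identDistrib_of_forall_measure_le_eq {Y Y' : Ω → ℝ} (hY : Measurable Y)
    (hY' : Measurable Y') (h : ∀ z, μ {ω | Y ω ≤ z} = μ {ω | Y' ω ≤ z}) : IdentDistrib Y Y' μ μ :=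
  ⟨hY.aemeasurable, hY'.aemeasurable, Measure.ext_of_Iic _ _ fun z => by
    rw [Measure.map_apply hY measurableSet_Iic, Measure.map_apply hY' measurableSet_Iic]
    exact h z⟩

theorem cdf_map_eq_max {Y : Ω → ℝ} (hY : Measurable Y) {F : ℝ → ℝ}
    (hF : ∀ z, μ {ω | Y ω ≤ z} = ENNReal.ofReal (F z)) :
    ⇑(cdf (μ.map Y)) = fun z => max (F z) 0 := funext fun z => by
  have := Measure.isProbabilityMeasure_map (μ := μ) hY.aemeasurable
  rw [cdf_eq_real, measureReal_def, Measure.map_apply hY measurableSet_Iic]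
  exact (congrArg ENNReal.toReal (hF z)).trans ENNReal.toReal_ofReal'

theorem uniformContinuous_cdf {ν : Measure ℝ} (h : Continuous (cdf ν)) :
    UniformContinuous (cdf ν) :=
  h.uniformContinuous_of_tendsto_atBot_atTop (tendsto_cdf_atBot ν) (tendsto_cdf_atTop ν)

variable {X : ℕ → Ω → ℝ}

theorem tendsto_measure_lt_abs_empiricalCDF_sub_cdf
    (hindep : Pairwise fun i j => IndepFun (X i) (X j) μ)
    (hident : ∀ t, IdentDistrib (X t) (X 0) μ μ) (z : ℝ) {c : ℝ} (hc : 0 < c) :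
    Tendsto (fun T => μ {ω | c < |empiricalCDF (X · ω) T z - cdf (μ.map (X 0)) z|})
      atTop (𝓝 0) := by
  have := Measure.isProbabilityMeasure_map (hident 0).aemeasurable_fst
  set g : ℝ → ℝ := (Set.Iic z).indicator 1
  have hg : Measurable g := measurable_one.indicator measurableSet_Iic
  have hemp : ∀ T ω, empiricalCDF (X · ω) T z = (T : ℝ)⁻¹ • ∑ t ∈ range T, g (X t ω) := by
    intro T ω
    simp [empiricalCDF, g, Set.indicator_apply, div_eq_inv_mul]
  have hmean : ∫ ω, g (X 0 ω) ∂μ = cdf (μ.map (X 0)) z := by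
    rw [cdf_eq_real, ← integral_map (hident 0).aemeasurable_fst hg.aestronglyMeasurable,
      integral_indicator_one measurableSet_Iic]
  have hgX : ∀ t, AEMeasurable (fun ω => g (X t ω)) μ := fun t =>
    hg.comp_aemeasurable (hident t).aemeasurable_fst
  have hint : Integrable (g ∘ X 0) μ :=
    .of_bound (hgX 0).aestronglyMeasurable 1 (ae_of_all _ fun ω => by
      simp only [Function.comp_apply, g, Set.indicator_apply]
      split_ifs <;> simp)
  have hslln := strong_law_ae (fun t => g ∘ X t) hint (fun i j hij => (hindep hij).comp hg hg)
    (fun t => (hident t).comp hg)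
  have hmeas : ∀ T, AEStronglyMeasurable (fun ω => empiricalCDF (X · ω) T z) μ := by
    intro T
    simp only [hemp]
    exact ((Finset.aemeasurable_fun_sum _ fun t _ => hgX t).const_smul
      (T : ℝ)⁻¹).aestronglyMeasurable
  have hconv := tendstoInMeasure_iff_dist.1 (tendstoInMeasure_of_tendsto_ae hmeas
    (g := fun _ => cdf (μ.map (X 0)) z) (by simpa [hemp, ← hmean] using hslln)) c hc
  refine tendsto_of_tendsto_of_tendsto_of_le_of_le tendsto_const_nhds hconv (fun _ => zero_le)
    fun T => measure_mono fun ω (hω : c < _) => ?_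
  exact (Real.dist_eq _ _ ▸ hω).le

theorem tendsto_measure_exists_lt_abs_empiricalCDF_sub_cdf
    (hindep : Pairwise fun i j => IndepFun (X i) (X j) μ)
    (hident : ∀ t, IdentDistrib (X t) (X 0) μ μ) (hcont : Continuous (cdf (μ.map (X 0))))
    {c : ℝ} (hc : 0 < c) :
    Tendsto (fun T => μ {ω | ∃ z, c < |empiricalCDF (X · ω) T z - cdf (μ.map (X 0)) z|})
      atTop (𝓝 0) := by
  set G := cdf (μ.map (X 0))
  obtain ⟨S, hS⟩ := (monotone_cdf _).exists_finset_abs_sub_le (uniformContinuous_cdf hcont)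
    (tendsto_cdf_atBot _) (tendsto_cdf_atTop _) (half_pos hc)
  have hsub : ∀ T, {ω | ∃ z, c < |empiricalCDF (X · ω) T z - G z|} ⊆
      ⋃ s ∈ S, {ω | c / 2 < |empiricalCDF (X · ω) T s - G s|} := by
    rintro T ω ⟨z, hz⟩
    by_contra h
    simp only [Set.mem_iUnion, Set.mem_ofPred_eq, not_exists, not_lt] at h
    have := hS _ (monotone_empiricalCDF _ T) (empiricalCDF_mem_Icc _ T) _ h z
    linarith
  have hlim : Tendsto (fun T => ∑ s ∈ S, μ {ω | c / 2 < |empiricalCDF (X · ω) T s - G s|})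
      atTop (𝓝 0) := by
    simpa using tendsto_finsetSum S fun s _ =>
      tendsto_measure_lt_abs_empiricalCDF_sub_cdf hindep hident s (half_pos hc)
  exact tendsto_of_tendsto_of_tendsto_of_le_of_le tendsto_const_nhds hlim (fun _ => zero_le)
    fun T => (measure_mono (hsub T)).trans (measure_biUnion_finset_le _ _)

end

/-- If `(ζ_t)` are i.i.d. with continuous cdf `F` and
`max_{t<T} |ζ̂_t − ζ_t| → 0` in probability, then the empirical cdfs `F̂` (of `ζ`)
and `F̃` (of `ζ̂`) satisfy `sup_z |F̂(z) − F̃(z)| → 0` in probability as `T → ∞`. -/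
theorem stmt_12
    {Ω : Type*} [MeasurableSpace Ω] (ℙ : Measure Ω) [IsProbabilityMeasure ℙ]
    (F : ℝ → ℝ) (hFcont : Continuous F)
    (ζ : ℕ → Ω → ℝ) (hmeas : ∀ t, Measurable (ζ t))
    -- i.i.d. with cdf F
    (hindep : ProbabilityTheory.iIndepFun ζ ℙ)
    (hcdf : ∀ t (z : ℝ), ℙ {ω | ζ t ω ≤ z} = ENNReal.ofReal (F z))
    -- triangular array of approximations, uniformly consistent in probability
    (ζhat : ℕ → ℕ → Ω → ℝ)
    (hconsist : ∀ ε : ℝ, 0 < ε →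
      Tendsto (fun T => ℙ {ω | ∃ t < T, ε < |ζhat T t ω - ζ t ω|}) atTop (nhds 0))
    -- the empirical cdfs
    (Fhat Ftilde : ℕ → Ω → ℝ → ℝ)
    (hFhat : ∀ T ω z, Fhat T ω z =
      (∑ t ∈ range T, if ζ t ω ≤ z then (1:ℝ) else 0) / T)
    (hFtilde : ∀ T ω z, Ftilde T ω z =
      (∑ t ∈ range T, if ζhat T t ω ≤ z then (1:ℝ) else 0) / T) :
    ∀ ε : ℝ, 0 < ε →
      Tendsto (fun T => ℙ {ω | ε < ⨆ z : ℝ, |Fhat T ω z - Ftilde T ω z|})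
        atTop (nhds 0) := by
  intro ε hε
  set G := ProbabilityTheory.cdf (ℙ.map (ζ 0))
  have hGcont : Continuous G := by
    rw [cdf_map_eq_max (hmeas 0) (hcdf 0)]
    exact hFcont.max continuous_const
  obtain ⟨δ, hδ, hGδ⟩ := (uniformContinuous_cdf hGcont).exists_pos_forall_sub_le (half_pos hε)
  have hsub : ∀ T, {ω | ε < ⨆ z, |Fhat T ω z - Ftilde T ω z|} ⊆
      {ω | ∃ t < T, δ < |ζhat T t ω - ζ t ω|} ∪
        {ω | ∃ z, ε / 4 < |empiricalCDF (ζ · ω) T z - G z|} := by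
    intro T ω (hω : ε < _)
    by_contra h
    simp only [Set.mem_union, Set.mem_ofPred_eq, not_or, not_exists, not_and, not_lt] at h
    rw [show Fhat T ω = empiricalCDF (ζ · ω) T from funext (hFhat T ω),
      show Ftilde T ω = empiricalCDF (ζhat T · ω) T from funext (hFtilde T ω)] at hω
    linarith [iSup_abs_empiricalCDF_sub_le (ProbabilityTheory.monotone_cdf _) hδ.le hGδ h.1 h.2]
  have hident : ∀ t, ProbabilityTheory.IdentDistrib (ζ t) (ζ 0) ℙ ℙ := fun t =>
    identDistrib_of_forall_measure_le_eq (hmeas t) (hmeas 0) fun z =>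
      (hcdf t z).trans (hcdf 0 z).symm
  have hlim := (hconsist δ hδ).add (tendsto_measure_exists_lt_abs_empiricalCDF_sub_cdf
    (fun i j hij => hindep.indepFun hij) hident hGcont (by positivity : 0 < ε / 4))
  rw [add_zero] at hlim
  exact tendsto_of_tendsto_of_tendsto_of_le_of_le tendsto_const_nhds hlim (fun _ => zero_le)
    fun T => (measure_mono (hsub T)).trans (measure_union_le _ _)
end
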